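/- Let (R,<) be a totally ordered commutative ring with 1 that is dense and shrinkable, and let r ∈ R with r ≠ 1. If the sequence (r^n) converges to some l ∈ R, then l = 0. -/

import Mathlib

/-!
Since `r ^ (n + 1) = r * r ^ n`, the shifted sequence tends both to `l` and to `r * l`.
Shrinkability makes multiplication by `r` continuous and density makes limits unique,
so `r * l = l`, i.e. `(r - 1) * l = 0`, and `l = 0` because `r ≠ 1` and `R` is a domain.
-/

def SeqTendsto {R : Type*} [AddCommGroup R] [LinearOrder R] (u : ℕ → R) (l : R) : Prop :=
  ∀ ε : R, 0 < ε → ∃ N : ℕ, ∀ n ≥ N, |u n - l| < ε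

namespace SeqTendsto

section AddGroup

variable {R : Type*} [AddCommGroup R] [LinearOrder R] {u : ℕ → R} {a b : R}

theorem comp_succ (hu : SeqTendsto u a) : SeqTendsto (fun n => u (n + 1)) a := fun ε hε =>
  let ⟨N, hN⟩ := hu ε hε
  ⟨N, fun n hn => hN (n + 1) (Nat.le_succ_of_le hn)⟩

theorem unique [IsOrderedAddMonoid R]
    (hdense : ∀ α : R, 0 < α → ∃ β γ : R, 0 < β ∧ 0 < γ ∧ β + γ < α)
    (ha : SeqTendsto u a) (hb : SeqTendsto u b) : a = b := by
  by_contra hab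
  obtain ⟨β, γ, hβ, hγ, hβγ⟩ := hdense |a - b| (abs_pos.2 (sub_ne_zero.2 hab))
  obtain ⟨N, hN⟩ := ha β hβ
  obtain ⟨M, hM⟩ := hb γ hγ
  have hua := hN (max N M) (le_max_left _ _)
  have hub := hM (max N M) (le_max_right _ _)
  have htri : |a - b| ≤ |u (max N M) - a| + |u (max N M) - b| := by
    simpa only [abs_sub_comm (u _) a] using abs_sub_le a (u (max N M)) b
  exact lt_irrefl _ (htri.trans_lt ((add_lt_add hua hub).trans hβγ))

end AddGroup

theorem const_mul {R : Type*} [CommRing R] [LinearOrder R] [IsStrictOrderedRing R]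
    (hshrink : ∀ α M : R, 0 < α → 0 < M → ∃ δ : R, 0 < δ ∧ M * δ < α)
    {u : ℕ → R} {l : R} (hu : SeqTendsto u l) (c : R) :
    SeqTendsto (fun n => c * u n) (c * l) := by
  intro ε hε
  rcases eq_or_ne c 0 with rfl | hc
  · exact ⟨0, fun n _ => by simpa using hε⟩
  obtain ⟨δ, hδ, hcδ⟩ := hshrink ε |c| hε (abs_pos.2 hc)
  obtain ⟨N, hN⟩ := hu δ hδ
  refine ⟨N, fun n hn => ?_⟩
  calc |c * u n - c * l| = |c| * |u n - l| := by rw [← mul_sub, abs_mul]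
    _ ≤ |c| * δ := mul_le_mul_of_nonneg_left (hN n hn).le (abs_nonneg c)
    _ < ε := hcδ

end SeqTendsto

/-- In a dense, shrinkable totally ordered commutative ring with 1, if `r ≠ 1` and
the sequence `(r^n)` converges to some `l`, then `l = 0`. -/
theorem limit_of_power_sequence_eq_zero
    {R : Type*} [CommRing R] [LinearOrder R] [IsStrictOrderedRing R]
    (hdense : ∀ α : R, 0 < α → ∃ β γ : R, 0 < β ∧ 0 < γ ∧ β + γ < α)
    (hshrink : ∀ α M : R, 0 < α → 0 < M →
      ∃ αl αr : R, 0 < αl ∧ 0 < αr ∧ M * αr < α ∧ αl * M < α)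
    (r : R) (hr : r ≠ 1) (l : R)
    (hlim : ∀ ε : R, 0 < ε → ∃ N : ℕ, ∀ n ≥ N, |r ^ n - l| < ε) :
    l = 0 := by
  have hpow : SeqTendsto (r ^ ·) l := hlim
  have hmul : SeqTendsto (fun n => r ^ (n + 1)) (r * l) := by
    have hshrink_right : ∀ α M : R, 0 < α → 0 < M → ∃ δ : R, 0 < δ ∧ M * δ < α :=
      fun α M hα hM =>
        let ⟨_, αr, _, hαr, hMαr, _⟩ := hshrink α M hα hM
        ⟨αr, hαr, hMαr⟩
    simpa only [pow_succ'] using hpow.const_mul hshrink_right r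
  have hfix : r * l = l := hmul.unique hdense hpow.comp_succ
  have hzero : (r - 1) * l = 0 := by rw [sub_mul, one_mul, hfix, sub_self]
  exact (mul_eq_zero.1 hzero).resolve_left (sub_ne_zero.2 hr)
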